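/- Let s be a real number and let θ(x) = x(x+s+1) ∈ ℝ[x]. If a real polynomial f satisfies f(−x−s−1) = −f(x) as polynomials, then the linear polynomial 2x+s+1 divides f in ℝ[x], and there exists a real polynomial g with f(x) = (2x+s+1)·g(x(x+s+1)). -/
import Mathlib

open Polynomial

lemma odd_poly_structure : ∀ p : Polynomial ℝ, p.comp (-X) = -p →
    ∃ q : Polynomial ℝ, p = X * q.comp (X ^ 2) := by
  suffices H : ∀ n : ℕ, ∀ p : Polynomial ℝ, p.natDegree ≤ n → p.comp (-X) = -p →
      ∃ q : Polynomial ℝ, p = X * q.comp (X ^ 2) by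
    intro p h; exact H p.natDegree p le_rfl h
  intro n
  induction n with
  | zero =>
    intro p hdeg h
    have hp : p = C (p.coeff 0) := eq_C_of_natDegree_le_zero hdeg
    have : p = -p := by rw [hp] at h ⊢; simpa using h
    have hp0 : p = 0 := by
      have := congrArg (eval 0) this
      simp at this
      rw [hp]
      simp [coeff_zero_eq_eval_zero]
      linarith
    exact ⟨0, by simp [hp0]⟩
  | succ n ih =>
    intro p hdeg h
    by_cases hp0 : p = 0
    · exact ⟨0, by simp [hp0]⟩
    have h0 : p.coeff 0 = 0 := by
      have := congrArg (eval 0) h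
      simp [coeff_zero_eq_eval_zero] at this ⊢
      linarith
    obtain ⟨r, hr⟩ : X ∣ p := X_dvd_iff.mpr h0
    have hr0 : r ≠ 0 := by rintro rfl; simp at hr; exact hp0 hr
    have heven : r.comp (-X) = r := by
      have hx : X * r.comp (-X) = X * r := by
        have h2 := h
        rw [hr, mul_comp, X_comp] at h2
        linear_combination -h2
      exact mul_left_cancel₀ X_ne_zero hx
    set a := r.coeff 0 with ha
    set t := r.divX with htdef
    have hrt : t * X + C a = r := divX_mul_X_add r
    have ht : t.comp (-X) = -t := by
      have hx : t.comp (-X) * X = (-t) * X := by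
        have h2 := heven
        rw [← hrt, add_comp, mul_comp, X_comp, C_comp] at h2
        linear_combination -h2
      exact mul_right_cancel₀ X_ne_zero hx
    have hdegt : t.natDegree ≤ n := by
      have h1 : t.natDegree ≤ r.natDegree := natDegree_divX_le
      have h2 : p.natDegree = 1 + r.natDegree := by
        rw [hr, natDegree_mul X_ne_zero hr0, natDegree_X]
      omega
    obtain ⟨u, hu⟩ := ih t hdegt ht
    refine ⟨C a + X * u, ?_⟩
    rw [hr, ← hrt, hu]
    simp only [add_comp, mul_comp, C_comp, X_comp]
    ring

/-- If a real polynomial is skew invariant under the involution `x ↦ -(x+s+1)`, then it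
is divisible by `2x+s+1` and the quotient is a polynomial in `θ(x) = x(x+s+1)`. -/
theorem skew_invariant_divisible (s : ℝ) (f : Polynomial ℝ)
    (hf : f.comp (-(X + C (s + 1))) = -f) :
    (2 * X + C (s + 1)) ∣ f ∧
      ∃ g : Polynomial ℝ, f = (2 * X + C (s + 1)) * g.comp (X * (X + C (s + 1))) := by
  set c : ℝ := (s + 1) / 2 with hc
  have h2c : (C (s + 1) : Polynomial ℝ) = C c + C c := by
    rw [← C_add]; congr 1; rw [hc]; ring
  set ft : Polynomial ℝ := f.comp (X - C c) with hft
  have hodd : ft.comp (-X) = -ft := by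
    have h1 : ft.comp (-X) = f.comp (-X - C c) := by
      rw [hft, comp_assoc]
      congr 1
      simp [sub_comp]
    have h2 : (f.comp (-(X + C (s + 1)))).comp (X - C c) = f.comp (-X - C c) := by
      rw [comp_assoc]
      congr 1
      simp only [neg_comp, add_comp, X_comp, C_comp, h2c]
      ring
    have h3 := congrArg (fun z => z.comp (X - C c)) hf
    simp only [neg_comp] at h3
    rw [h2] at h3
    rw [h1, h3, hft]
  obtain ⟨q, hq⟩ := odd_poly_structure ft hodd
  have hfback : f = ft.comp (X + C c) := by
    rw [hft, comp_assoc]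
    simp [sub_comp]
  have hhalf : (2 * X + C (s + 1)) * C (1/2 : ℝ) = X + C c := by
    have h2 : (2 : Polynomial ℝ) * C (1/2 : ℝ) = 1 := by
      rw [show (2 : Polynomial ℝ) = C 2 from (map_ofNat C 2).symm, ← C_mul]
      norm_num
    calc (2 * X + C (s + 1)) * C (1/2 : ℝ)
        = (2 * C (1/2 : ℝ)) * X + C (s + 1) * C (1/2 : ℝ) := by ring
      _ = X + C c := by
          rw [h2, ← C_mul, one_mul]
          congr 1
          rw [hc]; ring
  have hcomp : ((X : Polynomial ℝ) ^ 2).comp (X + C c) =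
      (X + C (c ^ 2)).comp (X * (X + C (s + 1))) := by
    simp only [pow_comp, X_comp, add_comp, mul_comp, C_comp]
    rw [h2c, show (C (c ^ 2) : Polynomial ℝ) = C c ^ 2 from map_pow C c 2]
    ring
  have key : f = (2 * X + C (s + 1)) *
      ((C (1/2 : ℝ) * q.comp (X + C (c ^ 2))).comp (X * (X + C (s + 1)))) := by
    rw [hfback, hq, mul_comp, X_comp, mul_comp, C_comp]
    rw [comp_assoc q, hcomp, ← comp_assoc q, ← hhalf]
    ring
  exact ⟨⟨_, key⟩, _, key⟩
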